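/- Every extra loop is a Moufang loop, i.e., a loop satisfying all three extra-loop identities satisfies the Moufang identity $x(y(xz)) = ((xy)x)z$. -/

import Mathlib

section Magma

variable {Q : Type*} (mul : Q → Q → Q)

def Flexible : Prop := ∀ a b, mul (mul a b) a = mul a (mul b a)

variable {mul}

theorem Flexible.of_extra_identity {e : Q} (hL : ∀ x, mul e x = x) (hR : ∀ x, mul x e = x)
    (hE2 : ∀ x y z, mul (mul (mul x y) z) x = mul x (mul y (mul z x))) :
    Flexible mul := by
  intro a b
  simpa only [hR, hL] using hE2 a e b

theorem Flexible.moufang (hflex : Flexible mul) (hdiv : ∀ u x, ∃ w, mul w x = u)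
    (hE1 : ∀ x y z, mul (mul x (mul y z)) y = mul (mul x y) (mul z y))
    (hE2 : ∀ x y z, mul (mul (mul x y) z) x = mul x (mul y (mul z x))) :
    ∀ x y z, mul x (mul y (mul x z)) = mul (mul (mul x y) x) z := by
  intro x y z
  obtain ⟨w, rfl⟩ := hdiv z x
  calc mul x (mul y (mul x (mul w x)))
      = mul x (mul y (mul (mul x w) x)) := by rw [hflex]
    _ = mul (mul (mul x y) (mul x w)) x := (hE2 x y (mul x w)).symm
    _ = mul (mul (mul x y) x) (mul w x) := hE1 (mul x y) x w

end Magma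

theorem extra_loop_is_moufang_general (Q : Type*) (mul rd : Q → Q → Q) (e : Q)
    (hQ4 : ∀ x y, mul (rd x y) y = x)
    (hL : ∀ x, mul e x = x) (hR : ∀ x, mul x e = x)
    (hE1 : ∀ x y z, mul (mul x (mul y z)) y = mul (mul x y) (mul z y))
    (hE2 : ∀ x y z, mul (mul (mul x y) z) x = mul x (mul y (mul z x))) :
    ∀ x y z, mul x (mul y (mul x z)) = mul (mul (mul x y) x) z :=
  (Flexible.of_extra_identity hL hR hE2).moufang (fun u x => ⟨rd u x, hQ4 u x⟩) hE1 hE2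

/-- Every extra loop is a Moufang loop. -/
theorem extra_loop_is_moufang (Q : Type*) (mul ld rd : Q → Q → Q) (e : Q)
    (hQ1 : ∀ x y, ld x (mul x y) = y) (hQ2 : ∀ x y, mul x (ld x y) = y)
    (hQ3 : ∀ x y, rd (mul x y) y = x) (hQ4 : ∀ x y, mul (rd x y) y = x)
    (hL : ∀ x, mul e x = x) (hR : ∀ x, mul x e = x)
    (hE1 : ∀ x y z, mul (mul x (mul y z)) y = mul (mul x y) (mul z y))
    (hE2 : ∀ x y z, mul (mul (mul x y) z) x = mul x (mul y (mul z x)))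
    (hE3 : ∀ x y z, mul (mul y z) (mul y x) = mul y (mul (mul z y) x)) :
    ∀ x y z, mul x (mul y (mul x z)) = mul (mul (mul x y) x) z :=
  extra_loop_is_moufang_general Q mul rd e hQ4 hL hR hE1 hE2
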